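/- Let f : ℝ³ → [0,∞) be measurable, not almost everywhere zero, with ∫_{ℝ³} |p| f(p) dp < ∞, let h ∈ ℝ³, and let m = min_{‖ξ‖=1} ∫_{ℝ³} |ξ·p| f(p) dp (> 0). Then for every C > 0, every positive definite B ∈ Sym3 with F(B) ≤ C satisfies det B ≥ 4/C² and every eigenvalue of B is at most C²/(256π²m²); consequently, the sublevel set {B ∈ Sym3 : B positive definite and F(B) ≤ C} is a compact subset of Sym3. -/

import Mathlib

open MeasureTheory Matrix Real Filter Topology Set Asymptotics

noncomputable section

/-- 3×3 real matrices; symmetric ones form `Sym3`, encoded via `Matrix.IsSymm`/`Matrix.PosDef`. -/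
abbrev Mat3 := Matrix (Fin 3) (Fin 3) ℝ

/-- vectors in ℝ³ -/
abbrev Vec3 := Fin 3 → ℝ

/-- Euclidean norm on ℝ³. -/
def enorm3 (p : Vec3) : ℝ := Real.sqrt (∑ i, p i ^ 2)

/-- the quadratic form pᵀBp. -/
def quadForm (B : Mat3) (p : Vec3) : ℝ := p ⬝ᵥ B.mulVec p

/-- Ψ(B)_{ij} = 4π (det B)^{1/2} ∫ (pᵀBp)^{−1/2} p_i p_j f(p) dp. -/
def PsiM (f : Vec3 → ℝ) (B : Mat3) : Mat3 :=
  Matrix.of fun i j =>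
    (4 * π) * Real.sqrt B.det * ∫ p : Vec3, (Real.sqrt (quadForm B p))⁻¹ * (p i * p j * f p)

/-- χ_b(k)_{ij} = 4π (det b)^{1/2} ∫ (pᵀbp)^{−3/2} ((bp)ᵀ k (bp)) p_i p_j f(p) dp. -/
def chiM (f : Vec3 → ℝ) (b : Mat3) (k : Mat3) : Mat3 :=
  Matrix.of fun i j =>
    (4 * π) * Real.sqrt b.det *
      ∫ p : Vec3, ((Real.sqrt (quadForm b p))⁻¹ ^ 3) * (quadForm k (b.mulVec p) * (p i * p j * f p))

/-- With u = ah, w = kh, α = hᵀah and b = a⁻¹: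
M_a(k) = (2/det a)((hᵀkh) a + α k − 2(u wᵀ + w uᵀ) + tr(bk)(2 u uᵀ − α a)). -/
def MM (a : Mat3) (h : Vec3) (k : Mat3) : Mat3 :=
  (2 / a.det) • ((h ⬝ᵥ k.mulVec h) • a + (h ⬝ᵥ a.mulVec h) • k
    - (2:ℝ) • (vecMulVec (a.mulVec h) (k.mulVec h) + vecMulVec (k.mulVec h) (a.mulVec h))
    + (a⁻¹ * k).trace • ((2:ℝ) • vecMulVec (a.mulVec h) (a.mulVec h) - (h ⬝ᵥ a.mulVec h) • a))

/-- The Fuchsian condition at B (with A = B⁻¹):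
2Ψ(B) = A − (2/det A)((hᵀAh) A − 2 (Ah)(Ah)ᵀ). -/
def FuchsCond (f : Vec3 → ℝ) (h : Vec3) (B : Mat3) : Prop :=
  (2:ℝ) • PsiM f B =
    B⁻¹ - (2 / (B⁻¹).det) •
      ((h ⬝ᵥ (B⁻¹).mulVec h) • B⁻¹ - (2:ℝ) • vecMulVec ((B⁻¹).mulVec h) ((B⁻¹).mulVec h))

/-- F(B) = 16π ∫ (pᵀBp)^{1/2} f dp + 2 (det B)^{−1/2} + 4 (det B)^{1/2} hᵀB⁻¹h. -/
def Ffun (f : Vec3 → ℝ) (h : Vec3) (B : Mat3) : ℝ :=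
  16 * π * (∫ p : Vec3, Real.sqrt (quadForm B p) * f p)
    + 2 * (Real.sqrt B.det)⁻¹ + 4 * Real.sqrt B.det * (h ⬝ᵥ (B⁻¹).mulVec h)

/-!
On positive definite matrices every term of `Ffun` is nonnegative, so `Ffun f h B ≤ C` bounds
both `2 (det B)^{-1/2}` and `16π ∫ (pᵀBp)^{1/2} f` by `C`; the first gives `det B ≥ 4 / C²`.
For the second, Cauchy–Schwarz for the form `B` gives `|Bξ · p| ≤ (ξᵀBξ)^{1/2} (pᵀBp)^{1/2}`,
and the minimality of `m` (rescaled) gives `m ‖Bξ‖ ≤ ∫ |Bξ · p| f`. Since `ξᵀBξ ≤ ‖ξ‖ ‖Bξ‖`,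
this yields `m (ξᵀBξ)^{1/2} ≤ ‖ξ‖ ∫ (pᵀBp)^{1/2} f`, which bounds the quadratic form, hence the
eigenvalues and the entries of `B`. The sublevel set is closed: a limit of its points is positive
semidefinite with `det ≥ 4 / C²`, hence positive definite, and `Ffun` is continuous where
`det B > 0`, by dominated convergence with the locally uniform bound `(pᵀAp)^{1/2} = O(‖p‖)`.
-/

lemma enorm3_eq_norm (p : Vec3) : enorm3 p = ‖WithLp.toLp 2 p‖ := by
  simp [enorm3, EuclideanSpace.norm_eq]

lemma enorm3_nonneg (p : Vec3) : 0 ≤ enorm3 p := Real.sqrt_nonneg _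

lemma enorm3_pos {p : Vec3} (hp : p ≠ 0) : 0 < enorm3 p := by
  rw [enorm3_eq_norm, norm_pos_iff]
  exact fun h0 => hp (by simpa using congrArg WithLp.ofLp h0)

lemma enorm3_smul (c : ℝ) (p : Vec3) : enorm3 (c • p) = |c| * enorm3 p := by
  rw [enorm3_eq_norm, enorm3_eq_norm, WithLp.toLp_smul, norm_smul, Real.norm_eq_abs]

lemma enorm3_sq (p : Vec3) : enorm3 p ^ 2 = p ⬝ᵥ p := by
  rw [enorm3, Real.sq_sqrt (by positivity)]
  simp [dotProduct, sq]

lemma enorm3_single (i : Fin 3) : enorm3 (Pi.single i 1) = 1 := by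
  simp [enorm3_eq_norm]

lemma abs_apply_le_enorm3 (p : Vec3) (i : Fin 3) : |p i| ≤ enorm3 p := by
  simpa [enorm3_eq_norm] using PiLp.norm_apply_le (WithLp.toLp 2 p) i

lemma abs_dotProduct_le_enorm3_mul (x y : Vec3) : |x ⬝ᵥ y| ≤ enorm3 x * enorm3 y := by
  simpa [enorm3_eq_norm, EuclideanSpace.inner_toLp_toLp, dotProduct_comm y x]
    using abs_real_inner_le_norm (WithLp.toLp 2 x) (WithLp.toLp 2 y)

namespace Matrix.PosSemidef

variable {n : Type*} [Fintype n] {B : Matrix n n ℝ}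

lemma dotProduct_mulVec_sq_le (hB : B.PosSemidef) (x y : n → ℝ) :
    (x ⬝ᵥ B *ᵥ y) ^ 2 ≤ (x ⬝ᵥ B *ᵥ x) * (y ⬝ᵥ B *ᵥ y) := by
  classical
  have hsymm : y ⬝ᵥ B *ᵥ x = x ⬝ᵥ B *ᵥ y := by
    rw [dotProduct_mulVec, ← mulVec_transpose, dotProduct_comm,
      ← conjTranspose_eq_transpose_of_trivial, hB.isHermitian.eq]
  have := LinearMap.BilinForm.apply_mul_apply_le_of_forall_zero_le (Matrix.toLinearMap₂' ℝ B)
    (fun z => by simpa [toLinearMap₂'_apply'] using hB.dotProduct_mulVec_nonneg z) x y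
  simpa only [toLinearMap₂'_apply', hsymm, ← sq] using this

lemma abs_apply_le_of_diag_le (hB : B.PosSemidef) {K : ℝ} (hK : ∀ i, B i i ≤ K) (i j : n) :
    |B i j| ≤ K := by
  classical
  have hcs := hB.dotProduct_mulVec_sq_le (Pi.single i 1) (Pi.single j 1)
  simp only [mulVec_single_one, single_one_dotProduct, col_apply] at hcs
  have hK0 : 0 ≤ K := hB.diag_nonneg.trans (hK i)
  refine abs_le_of_sq_le_sq (hcs.trans ?_) hK0
  rw [sq]
  exact mul_le_mul (hK i) (hK j) hB.diag_nonneg hK0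

end Matrix.PosSemidef

lemma Matrix.isClosed_setOf_posSemidef (n : Type*) [Fintype n] :
    IsClosed {B : Matrix n n ℝ | B.PosSemidef} := by
  simp only [posSemidef_iff_dotProduct_mulVec, star_trivial, ofPred_and, ofPred_forall]
  exact (isClosed_eq continuous_id.matrix_conjTranspose continuous_id).inter
    (isClosed_iInter fun x => isClosed_le continuous_const
      (continuous_const.dotProduct (continuous_id.matrix_mulVec continuous_const)))

instance {m n R : Type*} [Countable m] [Countable n] [TopologicalSpace R]
    [FirstCountableTopology R] : FirstCountableTopology (Matrix m n R) :=
  inferInstanceAs (FirstCountableTopology (m → n → R))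

lemma continuous_quadForm : Continuous fun x : Mat3 × Vec3 => quadForm x.1 x.2 :=
  continuous_snd.dotProduct (continuous_fst.matrix_mulVec continuous_snd)

lemma quadForm_nonneg {B : Mat3} (hB : B.PosSemidef) (p : Vec3) : 0 ≤ quadForm B p := by
  simpa [quadForm] using hB.dotProduct_mulVec_nonneg p

lemma quadForm_single (B : Mat3) (i : Fin 3) : quadForm B (Pi.single i 1) = B i i := by
  rw [quadForm, mulVec_single_one, single_one_dotProduct, col_apply]

lemma abs_quadForm_le (A : Mat3) (p : Vec3) :
    |quadForm A p| ≤ (∑ i, ∑ j, |A i j|) * enorm3 p ^ 2 := by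
  have hp := abs_apply_le_enorm3 p
  calc |quadForm A p| = |∑ i, ∑ j, p i * A i j * p j| := by
        simp only [quadForm, dotProduct, mulVec, Finset.mul_sum, mul_assoc]
    _ ≤ ∑ i, ∑ j, |A i j| * (enorm3 p * enorm3 p) := by
        refine (Finset.abs_sum_le_sum_abs _ _).trans (Finset.sum_le_sum fun i _ =>
          (Finset.abs_sum_le_sum_abs _ _).trans (Finset.sum_le_sum fun j _ => ?_))
        rw [abs_mul, abs_mul, mul_comm |p i|, mul_assoc]
        gcongr
        exacts [enorm3_nonneg p, hp i, hp j]
    _ = (∑ i, ∑ j, |A i j|) * enorm3 p ^ 2 := by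
        simp only [Finset.sum_mul, sq]

lemma sqrt_quadForm_le (A : Mat3) (p : Vec3) :
    √(quadForm A p) ≤ √(∑ i, ∑ j, |A i j|) * enorm3 p := by
  rw [← Real.sqrt_sq (enorm3_nonneg p), ← Real.sqrt_mul (by positivity)]
  exact Real.sqrt_le_sqrt ((le_abs_self _).trans (abs_quadForm_le A p))

section

variable {f : Vec3 → ℝ}

lemma integrable_sqrt_quadForm_mul (hf : AEStronglyMeasurable f volume)
    (hint : Integrable (fun p : Vec3 => enorm3 p * f p)) (B : Mat3) :
    Integrable (fun p => √(quadForm B p) * f p) := by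
  have hcont : Continuous fun p => √(quadForm B p) :=
    Real.continuous_sqrt.comp (continuous_quadForm.comp (.prodMk_right B))
  refine (hint.norm.const_mul √(∑ i, ∑ j, |B i j|)).mono' (hcont.aestronglyMeasurable.mul hf)
    (.of_forall fun p => ?_)
  rw [norm_mul, norm_mul, Real.norm_of_nonneg (Real.sqrt_nonneg _),
    Real.norm_of_nonneg (enorm3_nonneg p), ← mul_assoc]
  gcongr
  exact sqrt_quadForm_le B p

lemma continuous_integral_sqrt_quadForm_mul (hf : AEStronglyMeasurable f volume)
    (hint : Integrable (fun p : Vec3 => enorm3 p * f p)) :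
    Continuous fun B : Mat3 => ∫ p, √(quadForm B p) * f p := by
  refine continuous_iff_continuousAt.2 fun B => ?_
  set S : Mat3 → ℝ := fun A => ∑ i, ∑ j, |A i j|
  have hS : Continuous S := by fun_prop
  refine continuousAt_of_dominated (bound := fun p => √(S B + 1) * ‖enorm3 p * f p‖)
    (.of_forall fun A => (integrable_sqrt_quadForm_mul hf hint A).aestronglyMeasurable)
    ?_ (hint.norm.const_mul _) (.of_forall fun p => ?_)
  · filter_upwards [hS.continuousAt.eventually (gt_mem_nhds (lt_add_one (S B)))] with A hA
    refine .of_forall fun p => ?_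
    rw [norm_mul, norm_mul, Real.norm_of_nonneg (Real.sqrt_nonneg _),
      Real.norm_of_nonneg (enorm3_nonneg p), ← mul_assoc]
    gcongr
    exact (sqrt_quadForm_le A p).trans
      (mul_le_mul_of_nonneg_right (Real.sqrt_le_sqrt hA.le) (enorm3_nonneg p))
  · exact ((Real.continuous_sqrt.comp (continuous_quadForm.comp
      (.prodMk_left p))).mul continuous_const).continuousAt

lemma continuousOn_Ffun (hf : AEStronglyMeasurable f volume)
    (hint : Integrable (fun p : Vec3 => enorm3 p * f p)) (h : Vec3) :
    ContinuousOn (Ffun f h) {B | 0 < B.det} := by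
  have hdet : Continuous fun B : Mat3 => √B.det :=
    Real.continuous_sqrt.comp continuous_id.matrix_det
  have hinv : ContinuousOn (Inv.inv : Mat3 → Mat3) {B | 0 < B.det} := fun B hB =>
    (continuousAt_matrix_inv B (by
      rw [Ring.inverse_eq_inv']; exact continuousAt_inv₀ (ne_of_gt hB))).continuousWithinAt
  have hquad : ContinuousOn (fun B : Mat3 => h ⬝ᵥ B⁻¹ *ᵥ h) {B | 0 < B.det} :=
    (continuous_const.dotProduct (continuous_id.matrix_mulVec continuous_const)).comp_continuousOn
      hinv
  exact (((continuous_integral_sqrt_quadForm_mul hf hint).continuousOn.const_mul _).add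
    ((hdet.continuousOn.inv₀ fun B hB => (Real.sqrt_pos.2 hB).ne').const_mul _)).add
    ((hdet.continuousOn.const_mul _).mul hquad)

variable (h : Vec3) {B : Mat3} {C : ℝ}

lemma sixteen_pi_integral_le_Ffun (hB : B.PosDef) :
    16 * π * ∫ p, √(quadForm B p) * f p ≤ Ffun f h B := by
  have hquad : 0 ≤ h ⬝ᵥ B⁻¹ *ᵥ h := by simpa using hB.inv.posSemidef.dotProduct_mulVec_nonneg h
  have := Real.sqrt_nonneg B.det
  unfold Ffun
  nlinarith [inv_nonneg.2 this]

lemma two_mul_inv_sqrt_det_le_Ffun (hf : ∀ p, 0 ≤ f p) (hB : B.PosDef) :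
    2 * (√B.det)⁻¹ ≤ Ffun f h B := by
  have hquad : 0 ≤ h ⬝ᵥ B⁻¹ *ᵥ h := by simpa using hB.inv.posSemidef.dotProduct_mulVec_nonneg h
  have hint : 0 ≤ ∫ p, √(quadForm B p) * f p :=
    integral_nonneg fun p => mul_nonneg (Real.sqrt_nonneg _) (hf p)
  have := Real.sqrt_nonneg B.det
  unfold Ffun
  nlinarith [Real.pi_pos]

lemma four_div_sq_le_det_of_Ffun_le (hf : ∀ p, 0 ≤ f p) (hB : B.PosDef) (hC : 0 < C)
    (hF : Ffun f h B ≤ C) : 4 / C ^ 2 ≤ B.det := by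
  have hs : 0 < √B.det := Real.sqrt_pos.2 hB.det_pos
  have h2 : 2 ≤ C * √B.det := by
    have := (two_mul_inv_sqrt_det_le_Ffun h hf hB).trans hF
    rwa [← div_eq_mul_inv, div_le_iff₀ hs] at this
  rw [div_le_iff₀ (by positivity)]
  nlinarith [Real.sq_sqrt hB.det_pos.le]

lemma isClosed_setOf_posDef_Ffun_le (hf : Measurable f) (hf0 : ∀ p, 0 ≤ f p)
    (hint : Integrable (fun p : Vec3 => enorm3 p * f p)) (hC : 0 < C) :
    IsClosed {B : Mat3 | B.PosDef ∧ Ffun f h B ≤ C} := by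
  set T : Set Mat3 := {B | B.PosSemidef ∧ 4 / C ^ 2 ≤ B.det}
  have hT : IsClosed T :=
    (isClosed_setOf_posSemidef _).inter (isClosed_le continuous_const continuous_id.matrix_det)
  have hdet : ∀ B ∈ T, 0 < B.det := fun B hB => lt_of_lt_of_le (by positivity) hB.2
  have hS : {B : Mat3 | B.PosDef ∧ Ffun f h B ≤ C} = T ∩ Ffun f h ⁻¹' Iic C := by
    ext B
    constructor
    · rintro ⟨hB, hF⟩
      exact ⟨⟨hB.posSemidef, four_div_sq_le_det_of_Ffun_le h hf0 hB hC hF⟩, hF⟩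
    · rintro ⟨hB, hF⟩
      exact ⟨hB.1.posDef_iff_det_ne_zero.2 (hdet B hB).ne', hF⟩
  rw [hS]
  exact ((continuousOn_Ffun hf.aestronglyMeasurable hint h).mono hdet).preimage_isClosed_of_isClosed
    hT isClosed_Iic

variable {m : ℝ}

lemma mul_enorm3_le_integral_abs_dotProduct
    (hm : ∀ ξ, enorm3 ξ = 1 → m ≤ ∫ p, |ξ ⬝ᵥ p| * f p)
    (w : Vec3) : m * enorm3 w ≤ ∫ p, |w ⬝ᵥ p| * f p := by
  rcases eq_or_ne w 0 with rfl | hw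
  · simp [enorm3]
  have hw' := enorm3_pos hw
  have hunit : enorm3 ((enorm3 w)⁻¹ • w) = 1 := by
    rw [enorm3_smul, abs_of_pos (inv_pos.2 hw'), inv_mul_cancel₀ hw'.ne']
  have hle := hm _ hunit
  simp only [smul_dotProduct, smul_eq_mul, abs_mul, abs_of_pos (inv_pos.2 hw'), mul_assoc,
    integral_const_mul] at hle
  rwa [le_inv_mul_iff₀ hw', mul_comm] at hle

lemma mul_sqrt_quadForm_le_mul_integral (hf : Measurable f) (hf0 : ∀ p, 0 ≤ f p)
    (hint : Integrable (fun p : Vec3 => enorm3 p * f p))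
    (hm : ∀ ξ, enorm3 ξ = 1 → m ≤ ∫ p, |ξ ⬝ᵥ p| * f p)
    (hm0 : 0 ≤ m) (hB : B.PosSemidef) (ξ : Vec3) :
    m * √(quadForm B ξ) ≤ enorm3 ξ * ∫ p, √(quadForm B p) * f p := by
  set q := quadForm B ξ
  set I := ∫ p, √(quadForm B p) * f p
  have hI : 0 ≤ I := integral_nonneg fun p => mul_nonneg (Real.sqrt_nonneg _) (hf0 p)
  have hsymm : ∀ p, B *ᵥ ξ ⬝ᵥ p = ξ ⬝ᵥ B *ᵥ p := fun p => by
    rw [dotProduct_mulVec, ← mulVec_transpose, ← conjTranspose_eq_transpose_of_trivial,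
      hB.isHermitian.eq]
  have hcs : ∀ p, |B *ᵥ ξ ⬝ᵥ p| ≤ √q * √(quadForm B p) := fun p => by
    rw [hsymm, ← Real.sqrt_mul (quadForm_nonneg hB ξ), ← Real.sqrt_sq_eq_abs]
    exact Real.sqrt_le_sqrt (hB.dotProduct_mulVec_sq_le ξ p)
  have hq : m * q ≤ enorm3 ξ * (√q * I) := calc
    m * q ≤ m * (enorm3 ξ * enorm3 (B *ᵥ ξ)) :=
      mul_le_mul_of_nonneg_left ((le_abs_self _).trans (abs_dotProduct_le_enorm3_mul _ _)) hm0
    _ ≤ enorm3 ξ * ∫ p, |B *ᵥ ξ ⬝ᵥ p| * f p := by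
      rw [mul_left_comm]
      exact mul_le_mul_of_nonneg_left (mul_enorm3_le_integral_abs_dotProduct hm _)
        (enorm3_nonneg ξ)
    _ ≤ enorm3 ξ * (√q * I) := by
      refine mul_le_mul_of_nonneg_left ?_ (enorm3_nonneg ξ)
      rw [← integral_const_mul]
      refine integral_mono_of_nonneg (.of_forall fun p => mul_nonneg (abs_nonneg _) (hf0 p))
        ((integrable_sqrt_quadForm_mul hf.aestronglyMeasurable hint B).const_mul _)
        (.of_forall fun p => ?_)
      simp only [← mul_assoc]
      exact mul_le_mul_of_nonneg_right (hcs p) (hf0 p)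
  rcases (Real.sqrt_nonneg q).eq_or_lt with hs | hs
  · rw [← hs, mul_zero]
    exact mul_nonneg (enorm3_nonneg ξ) hI
  refine le_of_mul_le_mul_right ?_ hs
  calc m * √q * √q = m * q := by rw [mul_assoc, Real.mul_self_sqrt (quadForm_nonneg hB ξ)]
    _ ≤ enorm3 ξ * (√q * I) := hq
    _ = enorm3 ξ * I * √q := by ring

lemma quadForm_le_of_Ffun_le (hf : Measurable f) (hf0 : ∀ p, 0 ≤ f p)
    (hint : Integrable (fun p : Vec3 => enorm3 p * f p))
    (hm : ∀ ξ, enorm3 ξ = 1 → m ≤ ∫ p, |ξ ⬝ᵥ p| * f p)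
    (hm0 : 0 < m) (hB : B.PosDef) (hF : Ffun f h B ≤ C) (ξ : Vec3) :
    quadForm B ξ ≤ C ^ 2 / (256 * π ^ 2 * m ^ 2) * enorm3 ξ ^ 2 := by
  have hmq := mul_sqrt_quadForm_le_mul_integral hf hf0 hint hm hm0.le hB.posSemidef ξ
  have hI := (sixteen_pi_integral_le_Ffun h hB).trans hF
  have hs : 16 * π * m * √(quadForm B ξ) ≤ C * enorm3 ξ := by
    nlinarith [enorm3_nonneg ξ, Real.pi_pos]
  rw [← Real.sq_sqrt (quadForm_nonneg hB.posSemidef ξ), div_mul_eq_mul_div,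
    le_div_iff₀ (by positivity)]
  calc √(quadForm B ξ) ^ 2 * (256 * π ^ 2 * m ^ 2) = (16 * π * m * √(quadForm B ξ)) ^ 2 := by
        ring
    _ ≤ (C * enorm3 ξ) ^ 2 := pow_le_pow_left₀ (by positivity) hs 2
    _ = C ^ 2 * enorm3 ξ ^ 2 := by ring

lemma le_of_mulVec_eq_smul_of_Ffun_le (hf : Measurable f) (hf0 : ∀ p, 0 ≤ f p)
    (hint : Integrable (fun p : Vec3 => enorm3 p * f p))
    (hm : ∀ ξ, enorm3 ξ = 1 → m ≤ ∫ p, |ξ ⬝ᵥ p| * f p)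
    (hm0 : 0 < m) (hB : B.PosDef) (hF : Ffun f h B ≤ C) {μ : ℝ} {v : Vec3} (hv0 : v ≠ 0)
    (hv : B *ᵥ v = μ • v) : μ ≤ C ^ 2 / (256 * π ^ 2 * m ^ 2) := by
  have hq := quadForm_le_of_Ffun_le h hf hf0 hint hm hm0 hB hF v
  rw [quadForm, hv, dotProduct_smul, smul_eq_mul, ← enorm3_sq] at hq
  exact le_of_mul_le_mul_right hq (pow_pos (enorm3_pos hv0) 2)

lemma isCompact_setOf_posDef_Ffun_le (hf : Measurable f) (hf0 : ∀ p, 0 ≤ f p)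
    (hint : Integrable (fun p : Vec3 => enorm3 p * f p))
    (hm : ∀ ξ, enorm3 ξ = 1 → m ≤ ∫ p, |ξ ⬝ᵥ p| * f p)
    (hm0 : 0 < m) (hC : 0 < C) : IsCompact {B : Mat3 | B.PosDef ∧ Ffun f h B ≤ C} := by
  set K := C ^ 2 / (256 * π ^ 2 * m ^ 2)
  have hbox : IsCompact (Set.pi univ fun _ : Fin 3 => Set.pi univ fun _ : Fin 3 => Icc (-K) K) :=
    isCompact_univ_pi fun _ => isCompact_univ_pi fun _ => isCompact_Icc
  refine hbox.of_isClosed_subset (isClosed_setOf_posDef_Ffun_le h hf hf0 hint hC)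
    fun (B : Mat3) ⟨hB, hF⟩ i _ j _ =>
      abs_le.1 (hB.posSemidef.abs_apply_le_of_diag_le (fun k => ?_) i j)
  simpa only [quadForm_single, enorm3_single, one_pow, mul_one] using
    quadForm_le_of_Ffun_le h hf hf0 hint hm hm0 hB hF (Pi.single k 1)

end

theorem Ffun_sublevel_compact_general (f : Vec3 → ℝ) (h : Vec3) (m : ℝ)
    (hmeas : Measurable f) (hnonneg : ∀ p, 0 ≤ f p)
    (hint : Integrable (fun p : Vec3 => enorm3 p * f p))
    (hm : IsLeast ((fun ξ : Vec3 => ∫ p : Vec3, |ξ ⬝ᵥ p| * f p) '' {ξ : Vec3 | enorm3 ξ = 1}) m)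
    (hmpos : 0 < m) :
    ∀ C : ℝ, 0 < C →
      (∀ B : Mat3, B.PosDef → Ffun f h B ≤ C →
        4 / C ^ 2 ≤ B.det ∧
        ∀ (μ : ℝ) (v : Vec3), v ≠ 0 → B.mulVec v = μ • v →
          μ ≤ C ^ 2 / (256 * π ^ 2 * m ^ 2)) ∧
      IsCompact {B : Mat3 | B.PosDef ∧ Ffun f h B ≤ C} := by
  intro C hC
  replace hm : ∀ ξ, enorm3 ξ = 1 → m ≤ ∫ p, |ξ ⬝ᵥ p| * f p := fun ξ hξ => hm.2 ⟨ξ, hξ, rfl⟩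
  refine ⟨fun B hB hF => ⟨four_div_sq_le_det_of_Ffun_le h hnonneg hB hC hF,
    fun _ _ hv0 hv => le_of_mulVec_eq_smul_of_Ffun_le h hmeas hnonneg hint hm hmpos hB hF hv0 hv⟩,
    isCompact_setOf_posDef_Ffun_le h hmeas hnonneg hint hm hmpos hC⟩

/-- sublevel sets of F are bounded (det from below, eigenvalues from above)
and compact. -/
theorem Ffun_sublevel_compact (f : Vec3 → ℝ) (h : Vec3) (m : ℝ)
    (hmeas : Measurable f) (hnonneg : ∀ p, 0 ≤ f p)
    (hne : ¬ f =ᵐ[volume] 0)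
    (hint : Integrable (fun p : Vec3 => enorm3 p * f p))
    (hm : IsLeast ((fun ξ : Vec3 => ∫ p : Vec3, |ξ ⬝ᵥ p| * f p) '' {ξ : Vec3 | enorm3 ξ = 1}) m)
    (hmpos : 0 < m) :
    ∀ C : ℝ, 0 < C →
      (∀ B : Mat3, B.PosDef → Ffun f h B ≤ C →
        4 / C ^ 2 ≤ B.det ∧
        ∀ (μ : ℝ) (v : Vec3), v ≠ 0 → B.mulVec v = μ • v →
          μ ≤ C ^ 2 / (256 * π ^ 2 * m ^ 2)) ∧
      IsCompact {B : Mat3 | B.PosDef ∧ Ffun f h B ≤ C} :=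
  Ffun_sublevel_compact_general f h m hmeas hnonneg hint hm hmpos
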